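/- In the game G, suppose arccos(⟪θ*_A, θ*_D⟫) < π − arcsin(α/(1−α)) and let s = sign(⟪θ*_D, R θ*_A⟫). If (θ'_A, θ'_D) is any pure strategy Nash equilibrium of G, then θ'_D = s · R θ*_A and θ'_A = (√(1 − 2α) · θ*_A − α s · R θ*_A)/(1 − α). -/

import Mathlib

open Real

/-- The aggregate vector `(α θ_D + (1−α) θ_A)/‖α θ_D + (1−α) θ_A‖`. -/
noncomputable def aggregate (α : ℝ) (θA θD : EuclideanSpace ℝ (Fin 2)) :
    EuclideanSpace ℝ (Fin 2) :=
  (‖α • θD + (1 - α) • θA‖)⁻¹ • (α • θD + (1 - α) • θA)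

/-- `(θA', θD')` is a pure strategy Nash equilibrium of the game `G` with minority share `α`
and true preference vectors `θAstar`, `θDstar`: both strategies are unit vectors, and each is
a best response (payoffs are inner products of the aggregate with the true vectors). -/
def IsNashEq (α : ℝ) (θAstar θDstar θA' θD' : EuclideanSpace ℝ (Fin 2)) : Prop :=
  ‖θA'‖ = 1 ∧ ‖θD'‖ = 1 ∧
  (∀ θA : EuclideanSpace ℝ (Fin 2), ‖θA‖ = 1 →
    (inner ℝ (aggregate α θA θD') θAstar : ℝ) ≤ (inner ℝ (aggregate α θA' θD') θAstar : ℝ)) ∧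
  (∀ θD : EuclideanSpace ℝ (Fin 2), ‖θD‖ = 1 →
    (inner ℝ (aggregate α θA' θD) θDstar : ℝ) ≤ (inner ℝ (aggregate α θA' θD') θDstar : ℝ))

/-- Rotation by `π/2`: `R(x, y) = (−y, x)`. -/
noncomputable def Rot (x : EuclideanSpace ℝ (Fin 2)) : EuclideanSpace ℝ (Fin 2) :=
  (WithLp.equiv 2 (Fin 2 → ℝ)).symm ![-(x 1), x 0]

/-!
Player A carries the larger weight `1 - α > α`, so whatever D reports A can steer the aggregate
in any direction; at an equilibrium the aggregate is therefore `θ*_A`. Given `θ'_A`, the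
directions D can reach form the cone `{u | √(1 - 2α) ≤ ⟪u, (1 - α) θ'_A⟫}` of rays meeting the
circle of radius `α` about `(1 - α) θ'_A`, and `θ*_A` must maximise `⟪·, θ*_D⟫` on it. As
`θ*_D ≠ ±θ*_A`, moving `θ*_A` slightly towards `θ*_D`, i.e. along `s R θ*_A`, strictly increases
this payoff, so that move must leave the cone: `θ*_A` is a boundary ray and the cone lies on
its side away from `s R θ*_A`. So the aggregate is the point of tangency, where the radius
`θ'_D` is orthogonal to `θ*_A` and points towards `s R θ*_A`; thus `θ'_D = s R θ*_A`, and the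
aggregate has length `√(1 - 2α)`, which determines `θ'_A`.
-/

open RealInnerProductSpace Filter Topology

section InnerProductSpace

variable {E : Type*} [NormedAddCommGroup E] [InnerProductSpace ℝ E]

theorem smul_add_smul_ne_zero {α : ℝ} (hα : α < 1 / 2) {x y : E} (hx : ‖x‖ = 1) (hy : ‖y‖ = 1) :
    α • y + (1 - α) • x ≠ 0 := by
  rw [← norm_pos_iff]
  have := norm_sub_le_norm_add ((1 - α) • x) (α • y)
  rw [norm_smul, norm_smul, hx, hy, Real.norm_eq_abs, Real.norm_eq_abs, abs_of_pos (by linarith),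
    add_comm] at this
  cases abs_cases α <;> linarith

/-- The ray through `u` meets the sphere of radius `r` about `v`. -/
theorem exists_norm_eq_one_smul_add_eq_smul {u v : E} {r : ℝ} (hu : ‖u‖ = 1) (hr : 0 < r)
    (hdisc : ‖v‖ ^ 2 - r ^ 2 ≤ ⟪u, v⟫ ^ 2) (hpos : ‖v‖ < r ∨ 0 < ⟪u, v⟫) :
    ∃ y : E, ‖y‖ = 1 ∧ ∃ ν : ℝ, 0 < ν ∧ r • y + v = ν • u := by
  -- `ν` is the larger root of `‖ν • u - v‖ ^ 2 = ν ^ 2 - 2 ν ⟪u, v⟫ + ‖v‖ ^ 2 = r ^ 2`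
  set D := √(⟪u, v⟫ ^ 2 - (‖v‖ ^ 2 - r ^ 2))
  have hD : D ^ 2 = ⟪u, v⟫ ^ 2 - (‖v‖ ^ 2 - r ^ 2) := Real.sq_sqrt (by linarith)
  have hν : 0 < ⟪u, v⟫ + D := by
    rcases hpos with h | h
    · have : |⟪u, v⟫| < D := by
        apply abs_lt_of_sq_lt_sq _ (Real.sqrt_nonneg _)
        nlinarith [norm_nonneg v]
      linarith [neg_abs_le ⟪u, v⟫]
    · positivity
  refine ⟨r⁻¹ • ((⟪u, v⟫ + D) • u - v), ?_, ⟪u, v⟫ + D, hν, ?_⟩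
  · have h2 : ‖(⟪u, v⟫ + D) • u - v‖ ^ 2 = r ^ 2 := by
      rw [norm_sub_sq_real, norm_smul, inner_smul_left, hu, Real.norm_eq_abs, ← sq_abs]
      simp only [sq_abs, mul_one, conj_trivial]
      nlinarith
    rw [norm_smul, Real.norm_of_nonneg (inv_nonneg.2 hr.le), inv_mul_eq_one₀ hr.ne']
    exact (sq_eq_sq₀ hr.le (norm_nonneg _)).1 h2.symm
  · rw [smul_inv_smul₀ hr.ne', sub_add_cancel]

/-- Rational parametrisation of the unit circle in the plane of an orthonormal pair `a, b`,
leaving `a` towards `b`. -/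
noncomputable def circleParam (a b : E) (s : ℝ) : E :=
  (1 + s ^ 2)⁻¹ • ((1 - s ^ 2) • a + (2 * s) • b)

theorem inner_circleParam_left (a b w : E) (s : ℝ) :
    ⟪circleParam a b s, w⟫ = (1 + s ^ 2)⁻¹ * ((1 - s ^ 2) * ⟪a, w⟫ + 2 * s * ⟪b, w⟫) := by
  simp only [circleParam, inner_smul_left, inner_add_left, RCLike.conj_to_real]

theorem norm_circleParam {a b : E} (ha : ‖a‖ = 1) (hb : ‖b‖ = 1) (hab : ⟪a, b⟫ = 0) (s : ℝ) :
    ‖circleParam a b s‖ = 1 := by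
  have hau : ⟪a, circleParam a b s⟫ = (1 + s ^ 2)⁻¹ * (1 - s ^ 2) := by
    rw [real_inner_comm, inner_circleParam_left, real_inner_self_eq_norm_sq, ha, real_inner_comm,
      hab]
    ring
  have hbu : ⟪b, circleParam a b s⟫ = (1 + s ^ 2)⁻¹ * (2 * s) := by
    rw [real_inner_comm, inner_circleParam_left, real_inner_self_eq_norm_sq, hb, hab]
    ring
  rw [← pow_eq_one_iff_of_nonneg (norm_nonneg _) two_ne_zero, ← real_inner_self_eq_norm_sq,
    inner_circleParam_left, hau, hbu]
  field_simp
  ring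

theorem eventually_one_add_sq_mul_le {ℓ A B : ℝ} (hℓ : ℓ ≤ A) (hmove : ℓ < A ∨ 0 < B) :
    ∀ᶠ s in 𝓝[>] (0 : ℝ), (1 + s ^ 2) * ℓ ≤ (1 - s ^ 2) * A + 2 * s * B := by
  rcases hmove with h | h
  · refine eventually_nhdsWithin_of_eventually_nhds
      ((ContinuousAt.eventually_lt ?_ ?_ ?_).mono fun _ hs => hs.le)
    all_goals first | fun_prop | simpa using h
  · filter_upwards [self_mem_nhdsWithin, eventually_nhdsWithin_of_eventually_nhds
      (ContinuousAt.eventually_lt (f := fun s : ℝ => s * (A + ℓ)) (g := fun _ => 2 * B)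
        (by fun_prop) (by fun_prop) (by simpa using h))] with s hs hsB
    nlinarith [Set.mem_Ioi.1 hs]

/-- Otherwise moving from `a` along the circle towards `b` would stay in the region for a while
and increase `⟪·, d⟫`. -/
theorem IsMaxOn.inner_eq_and_inner_nonpos {a b d v : E} {ℓ : ℝ}
    (hmax : IsMaxOn (fun u => ⟪u, d⟫) {u | ‖u‖ = 1 ∧ ℓ ≤ ⟪u, v⟫} a)
    (ha : ‖a‖ = 1) (hb : ‖b‖ = 1) (hab : ⟪a, b⟫ = 0) (hbd : 0 < ⟪b, d⟫) (hℓ : ℓ ≤ ⟪a, v⟫) :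
    ⟪a, v⟫ = ℓ ∧ ⟪b, v⟫ ≤ 0 := by
  by_contra hcon
  have hmove : ℓ < ⟪a, v⟫ ∨ 0 < ⟪b, v⟫ := by
    by_contra h
    push Not at h
    exact hcon ⟨le_antisymm h.1 hℓ, h.2⟩
  have himprove : ∀ᶠ s in 𝓝[>] (0 : ℝ), s * ⟪a, d⟫ < ⟪b, d⟫ :=
    eventually_nhdsWithin_of_eventually_nhds
      (ContinuousAt.eventually_lt (by fun_prop) (by fun_prop) (by simpa using hbd))
  have hpos : ∀ᶠ s in 𝓝[>] (0 : ℝ), 0 < s := self_mem_nhdsWithin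
  obtain ⟨s, hs, hsv, hsd⟩ :=
    (hpos.and ((eventually_one_add_sq_mul_le hℓ hmove).and himprove)).exists
  have hle : ⟪circleParam a b s, d⟫ ≤ ⟪a, d⟫ := hmax ⟨norm_circleParam ha hb hab s, by
    rw [inner_circleParam_left, le_inv_mul_iff₀ (by positivity)]; linarith⟩
  rw [inner_circleParam_left, inv_mul_le_iff₀ (by positivity)] at hle
  nlinarith

theorem inner_eq_sqrt_of_smul_add_eq_smul {a q v : E} {α L : ℝ} (hα : α < 1 / 2)
    (ha : ‖a‖ = 1) (hq : ‖q‖ = 1) (hv : ‖v‖ = 1 - α) (hL : 0 < L) (hc : α • q + v = L • a) :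
    ⟪a, v⟫ = √(1 - 2 * α + α ^ 2 * ⟪a, q⟫ ^ 2) := by
  have hv' : v = L • a - α • q := eq_sub_of_add_eq' hc
  have hav : ⟪a, v⟫ = L - α * ⟪a, q⟫ := by
    rw [hv', inner_sub_right, inner_smul_right, inner_smul_right, real_inner_self_eq_norm_sq, ha]
    ring
  have hnorm : L ^ 2 - 2 * α * L * ⟪a, q⟫ = 1 - 2 * α := by
    have := norm_sub_sq_real (L • a) (α • q)
    rw [← hv', hv, norm_smul, norm_smul, inner_smul_left, inner_smul_right, ha, hq,
      Real.norm_eq_abs, Real.norm_eq_abs, mul_pow, mul_pow, sq_abs, sq_abs] at this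
    simp only [RCLike.conj_to_real] at this
    linear_combination -this
  rw [eq_comm, Real.sqrt_eq_iff_eq_sq (by nlinarith [sq_nonneg (α * ⟪a, q⟫)])]
  · rw [hav]; linear_combination -hnorm
  · rw [hav]; nlinarith [mul_pos hL (show 0 < L - 2 * α * ⟪a, q⟫ by nlinarith)]

theorem sqrt_le_inner_of_smul_add_eq_smul {a q v : E} {α L : ℝ} (hα : α < 1 / 2)
    (ha : ‖a‖ = 1) (hq : ‖q‖ = 1) (hv : ‖v‖ = 1 - α) (hL : 0 < L) (hc : α • q + v = L • a) :
    √(1 - 2 * α) ≤ ⟪a, v⟫ := by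
  rw [inner_eq_sqrt_of_smul_add_eq_smul hα ha hq hv hL hc]
  exact Real.sqrt_le_sqrt (le_add_of_nonneg_right (by positivity))

theorem inner_eq_zero_and_eq_sqrt_of_smul_add_eq_smul {a q v : E} {α L : ℝ} (hα : 0 < α)
    (hα' : α < 1 / 2) (ha : ‖a‖ = 1) (hq : ‖q‖ = 1) (hv : ‖v‖ = 1 - α) (hL : 0 < L)
    (hc : α • q + v = L • a) (htan : ⟪a, v⟫ = √(1 - 2 * α)) :
    ⟪a, q⟫ = 0 ∧ L = √(1 - 2 * α) := by
  have haq : ⟪a, q⟫ = 0 := by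
    rw [inner_eq_sqrt_of_smul_add_eq_smul hα' ha hq hv hL hc,
      Real.sqrt_inj (by nlinarith) (by linarith)] at htan
    simpa [hα.ne'] using (by linarith : α ^ 2 * ⟪a, q⟫ ^ 2 = 0)
  refine ⟨haq, ?_⟩
  rw [← htan, eq_sub_of_add_eq' hc, inner_sub_right, inner_smul_right, inner_smul_right, haq,
    real_inner_self_eq_norm_sq, ha]
  ring

end InnerProductSpace

local notation "ℝ²" => EuclideanSpace ℝ (Fin 2)

theorem inner_eq_fin_two (x y : ℝ²) : ⟪x, y⟫ = x 0 * y 0 + x 1 * y 1 := by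
  simp [PiLp.inner_apply, Fin.sum_univ_two, mul_comm]

theorem norm_sq_eq_fin_two (x : ℝ²) : ‖x‖ ^ 2 = x 0 ^ 2 + x 1 ^ 2 := by
  simp [EuclideanSpace.real_norm_sq_eq, Fin.sum_univ_two]

theorem rot_apply_zero (x : ℝ²) : Rot x 0 = -x 1 := rfl

theorem rot_apply_one (x : ℝ²) : Rot x 1 = x 0 := rfl

theorem inner_rot_self (x : ℝ²) : ⟪x, Rot x⟫ = 0 := by
  rw [inner_eq_fin_two, rot_apply_zero, rot_apply_one]
  ring

theorem norm_rot (x : ℝ²) : ‖Rot x‖ = ‖x‖ := by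
  rw [← sq_eq_sq₀ (norm_nonneg _) (norm_nonneg _), norm_sq_eq_fin_two, norm_sq_eq_fin_two,
    rot_apply_zero, rot_apply_one]
  ring

theorem eq_inner_smul_add_inner_rot_smul {a : ℝ²} (ha : ‖a‖ = 1) (x : ℝ²) :
    x = ⟪x, a⟫ • a + ⟪x, Rot a⟫ • Rot a := by
  have ha' := norm_sq_eq_fin_two a
  rw [ha, one_pow] at ha'
  refine PiLp.ext (Fin.forall_fin_two.2 ⟨?_, ?_⟩) <;>
    simp only [PiLp.add_apply, PiLp.smul_apply, smul_eq_mul, inner_eq_fin_two, rot_apply_zero,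
      rot_apply_one]
  · linear_combination x 0 * ha'
  · linear_combination x 1 * ha'

theorem eq_inner_rot_smul_of_inner_eq_zero {a x : ℝ²} (ha : ‖a‖ = 1) (hx : ‖x‖ = 1)
    (hax : ⟪x, a⟫ = 0) : x = ⟪x, Rot a⟫ • Rot a ∧ |⟪x, Rot a⟫| = 1 := by
  have hx' := eq_inner_smul_add_inner_rot_smul ha x
  rw [hax, zero_smul, zero_add] at hx'
  refine ⟨hx', ?_⟩
  have := congrArg norm hx'
  rwa [norm_smul, norm_rot, ha, mul_one, hx, Real.norm_eq_abs, eq_comm] at this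

theorem norm_sign_smul_rot {a : ℝ²} (ha : ‖a‖ = 1) {σ : ℝ} (hσ : σ ≠ 0) :
    ‖Real.sign σ • Rot a‖ = 1 := by
  rw [norm_smul, norm_rot, ha, mul_one, Real.norm_eq_abs]
  rcases Real.sign_apply_eq_of_ne_zero σ hσ with hs | hs <;> simp [hs]

theorem eq_or_eq_neg_of_inner_rot_eq_zero {a x : ℝ²} (ha : ‖a‖ = 1) (hx : ‖x‖ = 1)
    (h : ⟪x, Rot a⟫ = 0) : x = a ∨ x = -a := by
  have hx' := eq_inner_smul_add_inner_rot_smul ha x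
  rw [h, zero_smul, add_zero] at hx'
  have : |⟪x, a⟫| = 1 := by
    have := congrArg norm hx'
    rwa [norm_smul, ha, mul_one, hx, Real.norm_eq_abs, eq_comm] at this
  rcases abs_eq zero_le_one |>.1 this with h1 | h1
  · left; rw [hx', h1, one_smul]
  · right; rw [hx', h1, neg_one_smul]

theorem eq_of_inner_eq_zero_of_inner_nonneg {a b x : ℝ²} (ha : ‖a‖ = 1) (hb : ‖b‖ = 1)
    (hx : ‖x‖ = 1) (hab : ⟪b, a⟫ = 0) (hax : ⟪x, a⟫ = 0) (hbx : 0 ≤ ⟪b, x⟫) : x = b := by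
  obtain ⟨hb', hβ⟩ := eq_inner_rot_smul_of_inner_eq_zero ha hb hab
  obtain ⟨hx', hξ⟩ := eq_inner_rot_smul_of_inner_eq_zero ha hx hax
  rw [hb', hx', inner_smul_left, inner_smul_right, real_inner_self_eq_norm_sq, norm_rot, ha]
    at hbx
  simp only [conj_trivial, one_pow, mul_one] at hbx
  rw [hb', hx']
  congr 1
  rcases abs_eq zero_le_one |>.1 hβ with h | h <;>
    rcases abs_eq zero_le_one |>.1 hξ with h' | h' <;> rw [h, h'] at hbx ⊢ <;> linarith

theorem aggregate_eq_of_add_eq_smul {α ν : ℝ} {x y u : ℝ²} (hu : ‖u‖ = 1) (hν : 0 < ν)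
    (h : α • y + (1 - α) • x = ν • u) : aggregate α x y = u := by
  rw [aggregate, h, norm_smul, hu, mul_one, Real.norm_of_nonneg hν.le, inv_smul_smul₀ hν.ne']

theorem norm_aggregate {α : ℝ} (hα : α < 1 / 2) {x y : ℝ²} (hx : ‖x‖ = 1) (hy : ‖y‖ = 1) :
    ‖aggregate α x y‖ = 1 :=
  norm_smul_inv_norm (smul_add_smul_ne_zero hα hx hy)

namespace IsNashEq

variable {α : ℝ} {a d p q : ℝ²}

theorem aggregate_eq (hα : α < 1 / 2) (ha : ‖a‖ = 1) (h : IsNashEq α a d p q) :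
    aggregate α p q = a := by
  obtain ⟨hp, hq, hbestA, -⟩ := h
  have hαq : ‖α • q‖ < 1 - α := by
    rw [norm_smul, hq, mul_one, Real.norm_eq_abs, abs_lt]; constructor <;> linarith
  obtain ⟨x, hx, ν, hν, hxq⟩ := exists_norm_eq_one_smul_add_eq_smul (u := a) ha (by linarith)
    (by nlinarith [norm_nonneg (α • q)]) (Or.inl hαq)
  have hreach : aggregate α x q = a := aggregate_eq_of_add_eq_smul ha hν (by rwa [add_comm])
  have hle := hbestA x hx
  rw [hreach, real_inner_self_eq_norm_sq, ha, one_pow] at hle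
  have hnorm := norm_aggregate hα hp hq
  exact (inner_eq_one_iff_of_norm_eq_one hnorm ha).1
    (le_antisymm (by simpa [hnorm, ha] using real_inner_le_norm (aggregate α p q) a) hle)

theorem exists_smul_add_smul_eq_smul (hα : α < 1 / 2) (ha : ‖a‖ = 1) (h : IsNashEq α a d p q) :
    ∃ L : ℝ, 0 < L ∧ α • q + (1 - α) • p = L • a := by
  have hL := norm_pos_iff.2 (smul_add_smul_ne_zero hα h.1 h.2.1)
  refine ⟨_, hL, ?_⟩
  rw [← h.aggregate_eq hα ha, aggregate, smul_inv_smul₀ hL.ne']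

/-- The constraint set is the cone of directions that D can give the aggregate: the rays from
the origin meeting the circle of radius `α` about `(1 - α) • p`. -/
theorem isMaxOn (hα : 0 < α) (hα' : α < 1 / 2) (h : IsNashEq α a d p q) :
    IsMaxOn (fun u => ⟪u, d⟫) {u | ‖u‖ = 1 ∧ √(1 - 2 * α) ≤ ⟪u, (1 - α) • p⟫}
      (aggregate α p q) := by
  obtain ⟨hp, -, -, hbestD⟩ := h
  rintro u ⟨hu, hℓ⟩
  have hℓpos : 0 < √(1 - 2 * α) := Real.sqrt_pos.2 (by linarith)
  have hdisc : ‖(1 - α) • p‖ ^ 2 - α ^ 2 ≤ ⟪u, (1 - α) • p⟫ ^ 2 := by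
    have := pow_le_pow_left₀ hℓpos.le hℓ 2
    rw [Real.sq_sqrt (by linarith)] at this
    rw [norm_smul, hp, mul_one, Real.norm_of_nonneg (by linarith)]
    linarith
  obtain ⟨y, hy, ν, hν, hyp⟩ :=
    exists_norm_eq_one_smul_add_eq_smul hu hα hdisc (Or.inr (hℓpos.trans_le hℓ))
  have hreach : aggregate α p y = u := aggregate_eq_of_add_eq_smul hu hν hyp
  show ⟪u, d⟫ ≤ _
  exact hreach ▸ hbestD y hy

end IsNashEq

/-- Theorem 2 (uniqueness/form): if `∠(θ*_A, θ*_D) < π − arcsin(α/(1−α))` and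
`(θ'_A, θ'_D)` is any pure strategy Nash equilibrium, then with `s = sign(⟪θ*_D, R θ*_A⟫)`,
`θ'_D = s • R θ*_A` and `θ'_A = (√(1 − 2α) θ*_A − αs • R θ*_A)/(1 − α)`. -/
theorem stmt_13 (α : ℝ) (hα : 0 < α) (hα' : α < 1 / 2)
    (θAstar θDstar : EuclideanSpace ℝ (Fin 2))
    (hAs : ‖θAstar‖ = 1) (hDs : ‖θDstar‖ = 1) (hne : θAstar ≠ θDstar)
    (hangle : Real.arccos (inner ℝ θAstar θDstar : ℝ) < Real.pi - Real.arcsin (α / (1 - α)))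
    (θA' θD' : EuclideanSpace ℝ (Fin 2))
    (hNash : IsNashEq α θAstar θDstar θA' θD') :
    θD' = Real.sign (inner ℝ θDstar (Rot θAstar) : ℝ) • Rot θAstar ∧
    θA' = (1 - α)⁻¹ • (Real.sqrt (1 - 2 * α) • θAstar -
        (α * Real.sign (inner ℝ θDstar (Rot θAstar) : ℝ)) • Rot θAstar) := by
  have hσ : ⟪θDstar, Rot θAstar⟫ ≠ 0 := by
    intro h
    rcases eq_or_eq_neg_of_inner_rot_eq_zero hAs hDs h with h | h
    · exact hne h.symm
    · rw [h, inner_neg_right, real_inner_self_eq_norm_sq, hAs, one_pow, Real.arccos_neg_one]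
        at hangle
      linarith [Real.arcsin_pos.2 (div_pos hα (by linarith : 0 < 1 - α))]
  set s := Real.sign ⟪θDstar, Rot θAstar⟫
  have hb : ‖s • Rot θAstar‖ = 1 := norm_sign_smul_rot hAs hσ
  have hab : ⟪θAstar, s • Rot θAstar⟫ = 0 := by rw [inner_smul_right, inner_rot_self, mul_zero]
  have hbd : 0 < ⟪s • Rot θAstar, θDstar⟫ := by
    rw [inner_smul_left, real_inner_comm]; exact Real.sign_mul_pos_of_ne_zero _ hσ
  obtain ⟨L, hL, hc⟩ := hNash.exists_smul_add_smul_eq_smul hα' hAs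
  have hq : ‖θD'‖ = 1 := hNash.2.1
  have hv : ‖(1 - α) • θA'‖ = 1 - α := by
    rw [norm_smul, hNash.1, mul_one, Real.norm_of_nonneg (by linarith)]
  obtain ⟨htan, hbv⟩ :=
    (hNash.aggregate_eq hα' hAs ▸ hNash.isMaxOn hα hα').inner_eq_and_inner_nonpos hAs hb hab hbd
      (sqrt_le_inner_of_smul_add_eq_smul hα' hAs hq hv hL hc)
  obtain ⟨haq, hL'⟩ :=
    inner_eq_zero_and_eq_sqrt_of_smul_add_eq_smul hα hα' hAs hq hv hL hc htan
  have hv' : (1 - α) • θA' = L • θAstar - α • θD' := eq_sub_of_add_eq' hc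
  have hbq : 0 ≤ ⟪s • Rot θAstar, θD'⟫ := by
    rw [hv', inner_sub_right, inner_smul_right, inner_smul_right, real_inner_comm, hab] at hbv
    nlinarith
  have hqb := eq_of_inner_eq_zero_of_inner_nonneg hAs hb hq
    (by rwa [real_inner_comm]) (by rwa [real_inner_comm]) hbq
  refine ⟨hqb, ?_⟩
  rw [mul_smul, ← hqb, ← hL', ← hv', inv_smul_smul₀ (by linarith)]
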